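/- arXiv:1705.08352 — 2 statements merged into one kernel-verified Lean document; each statement's English description precedes it below -/
import Mathlib

section
/- Let ∇ be a smooth torsion-free connection on a neighborhood of P in ℝ^m and μ ∈ ℝ. If f₁, f₂ are solutions of H_∇ f = μ f ρ_{s,∇} near P that both vanish at P and satisfy df₁(P) = df₂(P), then f₁ = f₂ on a neighborhood of P. Consequently a solution is uniquely determined near P by its value and differential at P. -/
/-- Partial derivative in the `i`-th coordinate direction. -/
noncomputable def pd {n : ℕ} (i : Fin n) (f : (Fin n → ℝ) → ℝ) : (Fin n → ℝ) → ℝ :=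
  fun x => fderiv ℝ f x (Pi.single i 1)

/-- Affine Hessian: `(H_∇ f)ᵢⱼ = ∂ᵢ∂ⱼ f - Γᵢⱼᵏ ∂ₖ f`. -/
noncomputable def affHess {n : ℕ} (Γ : Fin n → Fin n → Fin n → (Fin n → ℝ) → ℝ)
    (f : (Fin n → ℝ) → ℝ) (i j : Fin n) : (Fin n → ℝ) → ℝ :=
  fun x => pd i (pd j f) x - ∑ k, Γ i j k x * pd k f x

/-- Coordinate Ricci tensor
`ρⱼₖ = ∂ᵢΓⱼₖⁱ - ∂ⱼΓᵢₖⁱ + ΓᵢₗⁱΓⱼₖˡ - ΓⱼₗⁱΓᵢₖˡ` (sums over `i`, `l`). -/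
noncomputable def ricci {n : ℕ} (Γ : Fin n → Fin n → Fin n → (Fin n → ℝ) → ℝ)
    (j k : Fin n) : (Fin n → ℝ) → ℝ :=
  fun x => ∑ i, (pd i (Γ j k i) x - pd j (Γ i k i) x
    + ∑ l, (Γ i l i x * Γ j k l x - Γ j l i x * Γ i k l x))

/-- Symmetrized Ricci tensor. -/
noncomputable def ricciS {n : ℕ} (Γ : Fin n → Fin n → Fin n → (Fin n → ℝ) → ℝ)
    (j k : Fin n) : (Fin n → ℝ) → ℝ :=
  fun x => (ricci Γ j k x + ricci Γ k j x) / 2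

open Metric Set Real

lemma clm_expand {m : ℕ} (L : (Fin m → ℝ) →L[ℝ] ℝ) (v : Fin m → ℝ) :
    L v = ∑ i, v i * L (Pi.single i 1) := by
  have hv : v = ∑ i, v i • (Pi.single i (1:ℝ) : Fin m → ℝ) := by
    ext j
    simp [Finset.sum_apply, Pi.single_apply, mul_ite]
  conv_lhs => rw [hv]
  rw [map_sum]
  simp [smul_eq_mul]

lemma contDiff_pd {m : ℕ} {f : (Fin m → ℝ) → ℝ} (hf : ContDiff ℝ 2 f) (i : Fin m) :
    ContDiff ℝ 1 (pd i f) := by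
  have h1 : ContDiff ℝ 1 (fderiv ℝ f) := hf.fderiv_right (by norm_num)
  exact h1.clm_apply contDiff_const

lemma pd_sub {m : ℕ} {f₁ f₂ : (Fin m → ℝ) → ℝ} (h₁ : Differentiable ℝ f₁)
    (h₂ : Differentiable ℝ f₂) (i : Fin m) :
    pd i (fun x => f₁ x - f₂ x) = fun x => pd i f₁ x - pd i f₂ x := by
  funext x
  simp only [pd]
  rw [fderiv_fun_sub (h₁ x) (h₂ x)]
  rfl

lemma hpdF {m : ℕ} {g : (Fin m → ℝ) → ℝ} (hfd2 : Differentiable ℝ (fderiv ℝ g))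
    (j : Fin m) (y : Fin m → ℝ) :
    HasFDerivAt (pd j g)
      ((ContinuousLinearMap.apply ℝ ℝ (Pi.single j 1)).comp (fderiv ℝ (fderiv ℝ g) y)) y := by
  have h := (ContinuousLinearMap.apply ℝ ℝ (Pi.single j 1 : Fin m → ℝ)).hasFDerivAt.comp y
    (hfd2 y).hasFDerivAt
  exact h


set_option maxHeartbeats 1000000 in
/-- two solutions of H_∇ f = μ f ρ_{s,∇} near P with the same value and
differential at P agree near P. -/
theorem stmt18 (m : ℕ) (hm : 1 ≤ m) (U : Set (Fin m → ℝ)) (hU : IsOpen U)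
    (P : Fin m → ℝ) (hP : P ∈ U)
    (Γ : Fin m → Fin m → Fin m → (Fin m → ℝ) → ℝ)
    (hΓ : ∀ i j k, ContDiff ℝ (⊤ : ℕ∞) (Γ i j k))
    (hsym : ∀ i j k, Γ i j k = Γ j i k)
    (μ : ℝ) (f₁ f₂ : (Fin m → ℝ) → ℝ)
    (hf₁ : ContDiff ℝ 2 f₁) (hf₂ : ContDiff ℝ 2 f₂)
    (hsol₁ : ∀ x ∈ U, ∀ i j : Fin m, affHess Γ f₁ i j x = μ * f₁ x * ricciS Γ i j x)
    (hsol₂ : ∀ x ∈ U, ∀ i j : Fin m, affHess Γ f₂ i j x = μ * f₂ x * ricciS Γ i j x)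
    (hval : f₁ P = 0) (hval' : f₂ P = 0)
    (hdf : fderiv ℝ f₁ P = fderiv ℝ f₂ P) :
    ∀ᶠ x in nhds P, f₁ x = f₂ x := by
  set g : (Fin m → ℝ) → ℝ := fun x => f₁ x - f₂ x with hgdef
  have hg : ContDiff ℝ 2 g := hf₁.sub hf₂
  have hgd : Differentiable ℝ g := hg.differentiable (by norm_num)
  have hgc : Continuous g := hgd.continuous
  have h1 : ContDiff ℝ 1 (fderiv ℝ g) := hg.fderiv_right (by norm_num)
  have hfd2 : Differentiable ℝ (fderiv ℝ g) := h1.differentiable (by norm_num)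
  have hf₁d : Differentiable ℝ f₁ := hf₁.differentiable (by norm_num)
  have hf₂d : Differentiable ℝ f₂ := hf₂.differentiable (by norm_num)
  have hpdg : ∀ j, pd j g = fun x => pd j f₁ x - pd j f₂ x := fun j => pd_sub hf₁d hf₂d j
  have hpd1 : ∀ j, ContDiff ℝ 1 (pd j g) := fun j => contDiff_pd hg j
  have hgP : g P = 0 := by simp [hgdef, hval, hval']
  have hfg0 : fderiv ℝ g P = 0 := by
    rw [hgdef]
    rw [fderiv_fun_sub (hf₁d P) (hf₂d P), hdf, sub_self]
  have hpdP : ∀ j, pd j g P = 0 := fun j => by simp [pd, hfg0]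
  -- the equation satisfied by g
  have heq : ∀ y ∈ U, ∀ i j, pd i (pd j g) y
      = ∑ k, Γ i j k y * pd k g y + μ * g y * ricciS Γ i j y := by
    intro y hy i j
    have e₁ := hsol₁ y hy i j
    have e₂ := hsol₂ y hy i j
    simp only [affHess] at e₁ e₂
    have E₁ : pd i (pd j f₁) y
        = ∑ k, Γ i j k y * pd k f₁ y + μ * f₁ y * ricciS Γ i j y := by linarith
    have E₂ : pd i (pd j f₂) y
        = ∑ k, Γ i j k y * pd k f₂ y + μ * f₂ y * ricciS Γ i j y := by linarith
    have hsplit : pd i (pd j g) y = pd i (pd j f₁) y - pd i (pd j f₂) y := by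
      rw [hpdg j, pd_sub ((contDiff_pd hf₁ j).differentiable (by norm_num))
        ((contDiff_pd hf₂ j).differentiable (by norm_num))]
    have hk : ∀ k, pd k g y = pd k f₁ y - pd k f₂ y := fun k => congrFun (hpdg k) y
    rw [hsplit, E₁, E₂]
    simp only [hk]
    simp only [hgdef, mul_sub, sub_mul, Finset.sum_sub_distrib]
    ring
  -- second derivative identification
  have hsecond : ∀ (i j : Fin m) y, pd i (pd j g) y
      = fderiv ℝ (fderiv ℝ g) y (Pi.single i 1) (Pi.single j 1) := by
    intro i j y
    show fderiv ℝ (pd j g) y (Pi.single i 1) = _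
    rw [(hpdF hfd2 j y).fderiv]
    rfl
  -- choose a closed ball inside U
  obtain ⟨ε, hε, hball⟩ := Metric.isOpen_iff.mp hU P hP
  set r : ℝ := ε / 2 with hrdef
  have hr : 0 < r := by positivity
  have hcb : closedBall P r ⊆ U :=
    (Metric.closedBall_subset_ball (by simp [hrdef]; linarith)).trans hball
  -- continuity of coefficients
  have hΓc : ∀ i j k, Continuous (Γ i j k) := fun i j k => (hΓ i j k).continuous
  have hpdΓ : ∀ (i j k l : Fin m), Continuous (pd i (Γ j k l)) := fun i j k l =>
    (contDiff_pd ((hΓ j k l).of_le (by exact WithTop.coe_le_coe.mpr (le_top : (2:ℕ∞) ≤ ⊤))) i).continuous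
  have hricci : ∀ j k, Continuous (ricci Γ j k) := by
    intro j k
    unfold ricci
    refine continuous_finset_sum _ fun i _ => ?_
    exact ((hpdΓ i j k i).sub (hpdΓ j i k i)).add (continuous_finset_sum _ fun l _ =>
      ((hΓc i l i).mul (hΓc j k l)).sub ((hΓc j l i).mul (hΓc i k l)))
  have hricciS : ∀ j k, Continuous (ricciS Γ j k) := fun j k =>
    ((hricci j k).add (hricci k j)).div_const 2
  -- bound on coefficients
  set Φ : (Fin m → ℝ) → ℝ := fun x => ∑ i, ∑ j,
    (|μ| * |ricciS Γ i j x| + ∑ k, |Γ i j k x|) with hΦdef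
  have hΦc : Continuous Φ := by
    refine continuous_finset_sum _ fun i _ => continuous_finset_sum _ fun j _ => ?_
    exact ((continuous_const.mul (hricciS i j).abs)).add
      (continuous_finset_sum _ fun k _ => (hΓc i j k).abs)
  obtain ⟨B, hB⟩ : ∃ B, ∀ x ∈ closedBall P r, Φ x ≤ B := by
    obtain ⟨x₀, _, hx₀⟩ := (isCompact_closedBall P r).exists_isMaxOn
      ⟨P, mem_closedBall_self hr.le⟩ hΦc.continuousOn
    exact ⟨Φ x₀, hx₀⟩
  have htermΦ : ∀ (i j : Fin m) x, |μ| * |ricciS Γ i j x| + ∑ k, |Γ i j k x| ≤ Φ x := by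
    intro i j x
    have hnn : ∀ a b : Fin m, 0 ≤ |μ| * |ricciS Γ a b x| + ∑ k, |Γ a b k x| :=
      fun a b => add_nonneg (mul_nonneg (abs_nonneg _) (abs_nonneg _))
        (Finset.sum_nonneg fun k _ => abs_nonneg _)
    calc |μ| * |ricciS Γ i j x| + ∑ k, |Γ i j k x|
        ≤ ∑ j', (|μ| * |ricciS Γ i j' x| + ∑ k, |Γ i j' k x|) :=
          Finset.single_le_sum (fun j' _ => hnn i j') (Finset.mem_univ j)
      _ ≤ Φ x := Finset.single_le_sum
          (fun i' _ => Finset.sum_nonneg fun j' _ => hnn i' j') (Finset.mem_univ i)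
  have hB0 : 0 ≤ B := by
    have h0 := hB P (mem_closedBall_self hr.le)
    have h1 := htermΦ ⟨0, hm⟩ ⟨0, hm⟩ P
    have hnn : (0:ℝ) ≤ |μ| * |ricciS Γ ⟨0, hm⟩ ⟨0, hm⟩ P| + ∑ k, |Γ ⟨0, hm⟩ ⟨0, hm⟩ k P| :=
      add_nonneg (mul_nonneg (abs_nonneg _) (abs_nonneg _))
        (Finset.sum_nonneg fun k _ => abs_nonneg _)
    linarith
  have hBΓ : ∀ (i j : Fin m), ∀ x ∈ closedBall P r, ∑ k, |Γ i j k x| ≤ B := by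
    intro i j x hx
    have := htermΦ i j x
    have h2 := hB x hx
    have : |μ| * |ricciS Γ i j x| + ∑ k, |Γ i j k x| ≤ B := le_trans this h2
    have hnn : 0 ≤ |μ| * |ricciS Γ i j x| := mul_nonneg (abs_nonneg _) (abs_nonneg _)
    linarith
  have hBρ : ∀ (i j : Fin m), ∀ x ∈ closedBall P r, |μ| * |ricciS Γ i j x| ≤ B := by
    intro i j x hx
    have h1 := htermΦ i j x
    have h2 := hB x hx
    have hnn : 0 ≤ ∑ k, |Γ i j k x| := Finset.sum_nonneg fun k _ => abs_nonneg _
    linarith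
  set K : ℝ := (m : ℝ) * r * (2 * B + 1) with hKdef
  -- the main claim
  have hmain : ∀ x ∈ closedBall P r, g x = 0 := by
    intro x hx
    set v : Fin m → ℝ := x - P with hvdef
    set γ : ℝ → (Fin m → ℝ) := fun t => P + t • v with hγdef
    have hγ0 : γ 0 = P := by simp [hγdef]
    have hγ1 : γ 1 = x := by simp [hγdef, hvdef]
    have hvnorm : ‖v‖ ≤ r := by
      rw [hvdef, ← dist_eq_norm]
      exact mem_closedBall.mp hx
    have hvir : ∀ i, |v i| ≤ r := fun i => le_trans (norm_le_pi_norm v i) hvnorm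
    have hγmem : ∀ t ∈ Icc (0:ℝ) 1, γ t ∈ closedBall P r := by
      intro t ht
      rw [mem_closedBall, dist_eq_norm]
      have : γ t - P = t • v := by simp [hγdef]
      rw [this, norm_smul]
      calc ‖t‖ * ‖v‖ ≤ 1 * r := by
            apply mul_le_mul _ hvnorm (norm_nonneg _) zero_le_one
            rw [Real.norm_eq_abs, abs_le]; constructor <;> linarith [ht.1, ht.2]
        _ = r := one_mul r
    have hγd : ∀ t : ℝ, HasDerivAt γ v t := by
      intro t
      have h := ((hasDerivAt_id t).smul_const v).const_add P
      simpa [hγdef] using h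
    have hγc : Continuous γ := continuous_const.add (continuous_id.smul continuous_const)
    set u : ℝ → ℝ × (Fin m → ℝ) := fun t => (g (γ t), fun j => pd j g (γ t)) with hudef
    set u' : ℝ → ℝ × (Fin m → ℝ) := fun t => (∑ i, v i * pd i g (γ t),
      fun j => ∑ i, v i * (∑ k, Γ i j k (γ t) * pd k g (γ t)
        + μ * g (γ t) * ricciS Γ i j (γ t))) with hu'def
    have hud : ∀ t ∈ Icc (0:ℝ) 1, HasDerivAt u (u' t) t := by
      intro t ht
      have hyU : γ t ∈ U := hcb (hγmem t ht)
      apply HasDerivAt.prodMk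
      · have h := (hgd (γ t)).hasFDerivAt.comp_hasDerivAt t (hγd t)
        have e : (fderiv ℝ g (γ t)) v = ∑ i, v i * pd i g (γ t) := clm_expand _ v
        rw [← e]
        exact h
      · rw [hasDerivAt_pi]
        intro j
        have h := (hpdF hfd2 j (γ t)).comp_hasDerivAt t (hγd t)
        have e : ((ContinuousLinearMap.apply ℝ ℝ (Pi.single j 1)).comp
            (fderiv ℝ (fderiv ℝ g) (γ t))) v
            = ∑ i, v i * (∑ k, Γ i j k (γ t) * pd k g (γ t)
              + μ * g (γ t) * ricciS Γ i j (γ t)) := by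
          rw [clm_expand]
          refine Finset.sum_congr rfl fun i _ => ?_
          congr 1
          have : ((ContinuousLinearMap.apply ℝ ℝ (Pi.single j 1)).comp
              (fderiv ℝ (fderiv ℝ g) (γ t))) (Pi.single i 1)
              = fderiv ℝ (fderiv ℝ g) (γ t) (Pi.single i 1) (Pi.single j 1) := rfl
          rw [this, ← hsecond i j (γ t)]
          exact heq (γ t) hyU i j
        rw [← e]
        exact h
    have hucont : Continuous u := by
      refine Continuous.prodMk (hgc.comp hγc) ?_
      exact continuous_pi fun j => ((hpd1 j).continuous).comp hγc
    have hu0 : u 0 = 0 := by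
      rw [hudef]
      simp only [hγ0]
      ext
      · simpa using hgP
      · simp only [Prod.snd_zero, Pi.zero_apply]
        simpa using hpdP _
    have hbnd : ∀ t ∈ Ico (0:ℝ) 1, ‖u' t‖ ≤ K * ‖u t‖ + 0 := by
      intro t ht
      have htI : t ∈ Icc (0:ℝ) 1 := Ico_subset_Icc_self ht
      have hy : γ t ∈ closedBall P r := hγmem t htI
      set y := γ t with hydef
      set N := ‖u t‖ with hNdef
      have hN0 : 0 ≤ N := norm_nonneg _
      have hN1 : |g y| ≤ N := by
        have := norm_fst_le (u t)
        rw [Real.norm_eq_abs] at this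
        exact this
      have hN2 : ∀ k, |pd k g y| ≤ N := by
        intro k
        have h1 : ‖(u t).2 k‖ ≤ ‖(u t).2‖ := norm_le_pi_norm _ k
        have h2 := norm_snd_le (u t)
        have : ‖(u t).2 k‖ ≤ N := le_trans h1 h2
        simpa [hudef, Real.norm_eq_abs] using this
      have hS : ∀ i j : Fin m, |∑ k, Γ i j k y * pd k g y + μ * g y * ricciS Γ i j y|
          ≤ 2 * B * N := by
        intro i j
        have h1 : |∑ k, Γ i j k y * pd k g y| ≤ B * N := by
          calc |∑ k, Γ i j k y * pd k g y| ≤ ∑ k, |Γ i j k y * pd k g y| :=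
                Finset.abs_sum_le_sum_abs _ _
            _ ≤ ∑ k, |Γ i j k y| * N := Finset.sum_le_sum fun k _ => by
                rw [abs_mul]
                exact mul_le_mul_of_nonneg_left (hN2 k) (abs_nonneg _)
            _ = (∑ k, |Γ i j k y|) * N := (Finset.sum_mul _ _ _).symm
            _ ≤ B * N := mul_le_mul_of_nonneg_right (hBΓ i j y hy) hN0
        have h2 : |μ * g y * ricciS Γ i j y| ≤ B * N := by
          rw [abs_mul, abs_mul]
          calc |μ| * |g y| * |ricciS Γ i j y| = |μ| * |ricciS Γ i j y| * |g y| := by ring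
            _ ≤ B * N := mul_le_mul (hBρ i j y hy) hN1 (abs_nonneg _) hB0
        calc |∑ k, Γ i j k y * pd k g y + μ * g y * ricciS Γ i j y|
            ≤ |∑ k, Γ i j k y * pd k g y| + |μ * g y * ricciS Γ i j y| := abs_add_le _ _
          _ ≤ 2 * B * N := by linarith
      have hKN0 : 0 ≤ K * N :=
        mul_nonneg (mul_nonneg (mul_nonneg (Nat.cast_nonneg m) hr.le) (by linarith)) hN0
      rw [add_zero, Prod.norm_def]
      apply max_le
      · have : |∑ i, v i * pd i g y| ≤ (m : ℝ) * (r * N) := by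
          calc |∑ i, v i * pd i g y| ≤ ∑ i, |v i * pd i g y| := Finset.abs_sum_le_sum_abs _ _
            _ ≤ ∑ i : Fin m, r * N := Finset.sum_le_sum fun i _ => by
                rw [abs_mul]
                exact mul_le_mul (hvir i) (hN2 i) (abs_nonneg _) hr.le
            _ = (m : ℝ) * (r * N) := by
                rw [Finset.sum_const, Finset.card_univ, Fintype.card_fin, nsmul_eq_mul]
        have hmrN : (m : ℝ) * (r * N) ≤ K * N := by
          rw [hKdef]
          nlinarith [mul_nonneg (mul_nonneg (Nat.cast_nonneg m : (0:ℝ) ≤ m) hr.le) hN0,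
            mul_nonneg (mul_nonneg (mul_nonneg (Nat.cast_nonneg m : (0:ℝ) ≤ m) hr.le) hB0) hN0]
        calc ‖(u' t).1‖ = |∑ i, v i * pd i g y| := by simp [hu'def, Real.norm_eq_abs, hydef]
          _ ≤ (m : ℝ) * (r * N) := this
          _ ≤ K * N := hmrN
      · rw [pi_norm_le_iff_of_nonneg hKN0]
        intro j
        have hj : |∑ i, v i * (∑ k, Γ i j k y * pd k g y + μ * g y * ricciS Γ i j y)|
            ≤ (m : ℝ) * (r * (2 * B * N)) := by
          calc |∑ i, v i * (∑ k, Γ i j k y * pd k g y + μ * g y * ricciS Γ i j y)|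
              ≤ ∑ i, |v i * (∑ k, Γ i j k y * pd k g y + μ * g y * ricciS Γ i j y)| :=
                Finset.abs_sum_le_sum_abs _ _
            _ ≤ ∑ i : Fin m, r * (2 * B * N) := Finset.sum_le_sum fun i _ => by
                rw [abs_mul]
                exact mul_le_mul (hvir i) (hS i j) (abs_nonneg _) hr.le
            _ = (m : ℝ) * (r * (2 * B * N)) := by
                rw [Finset.sum_const, Finset.card_univ, Fintype.card_fin, nsmul_eq_mul]
        have h2 : (m : ℝ) * (r * (2 * B * N)) ≤ K * N := by
          rw [hKdef]
          nlinarith [mul_nonneg (mul_nonneg (Nat.cast_nonneg m : (0:ℝ) ≤ m) hr.le) hN0]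
        calc ‖(u' t).2 j‖ = |∑ i, v i * (∑ k, Γ i j k y * pd k g y
              + μ * g y * ricciS Γ i j y)| := by simp [hu'def, Real.norm_eq_abs, hydef]
          _ ≤ K * N := le_trans hj h2
    have hgron := norm_le_gronwallBound_of_norm_deriv_right_le (δ := 0) (K := K) (ε := 0)
      (hucont.continuousOn)
      (fun t ht => (hud t (Ico_subset_Icc_self ht)).hasDerivWithinAt)
      (by simp [hu0]) hbnd
    have h1 := hgron 1 (by constructor <;> norm_num)
    rw [gronwallBound_ε0_δ0] at h1
    have hu1 : u 1 = 0 := norm_le_zero_iff.mp h1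
    have : g (γ 1) = 0 := congrArg Prod.fst hu1
    rwa [hγ1] at this
  filter_upwards [Metric.closedBall_mem_nhds P hr] with x hx
  have := hmain x hx
  have : f₁ x - f₂ x = 0 := this
  linarith
end

section
/- On ℝ², let ∇ be a flat torsion-free connection (all Christoffel symbols zero in the given coordinates) and let g be a smooth function. Define ∇̃ by Γ̃ᵢⱼᵏ = δᵢᵏ∂ⱼg + δⱼᵏ∂ᵢg. Then the solution space of H_∇̃ f = -f ρ_{s,∇̃} on a simply connected neighborhood of any point is exactly e^g·Span{1, x¹, x²}, and in particular is 3-dimensional. -/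
abbrev E2 := (Fin 2 → ℝ)

section helpers

lemma pd_smooth {f : E2 → ℝ} (hf : ContDiff ℝ (⊤:ℕ∞) f) (i : Fin 2) :
    ContDiff ℝ (⊤:ℕ∞) (pd i f) := by
  have h := hf.fderiv_right (m := (⊤:ℕ∞)) (by exact_mod_cast le_top)
  exact (ContinuousLinearMap.apply ℝ ℝ (Pi.single i 1)).contDiff.comp h

lemma pd_c1 {f : E2 → ℝ} (hf : ContDiff ℝ 2 f) (i : Fin 2) :
    ContDiff ℝ 1 (pd i f) := by
  have h := hf.fderiv_right (m := 1) (by norm_num)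
  exact (ContinuousLinearMap.apply ℝ ℝ (Pi.single i 1)).contDiff.comp h

lemma pd_mul {f h : E2 → ℝ} {x : E2} (hf : DifferentiableAt ℝ f x)
    (hh : DifferentiableAt ℝ h x) (i : Fin 2) :
    pd i (fun y => f y * h y) x = pd i f x * h x + f x * pd i h x := by
  unfold pd
  rw [fderiv_fun_mul hf hh]
  simp only [ContinuousLinearMap.add_apply, ContinuousLinearMap.smul_apply, smul_eq_mul]
  ring

lemma pd_exp {c : E2 → ℝ} {x : E2} (hc : DifferentiableAt ℝ c x) (i : Fin 2) :
    pd i (fun y => Real.exp (c y)) x = Real.exp (c x) * pd i c x := by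
  unfold pd
  rw [fderiv_exp hc]
  simp

lemma pd_const (c : ℝ) (i : Fin 2) (x : E2) : pd i (fun _ => c) x = 0 := by
  unfold pd; simp

lemma pd_add {f h : E2 → ℝ} {x : E2} (hf : DifferentiableAt ℝ f x)
    (hh : DifferentiableAt ℝ h x) (i : Fin 2) :
    pd i (fun y => f y + h y) x = pd i f x + pd i h x := by
  unfold pd; rw [fderiv_fun_add hf hh]; simp

lemma pd_sub_s19 {f h : E2 → ℝ} {x : E2} (hf : DifferentiableAt ℝ f x)
    (hh : DifferentiableAt ℝ h x) (i : Fin 2) :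
    pd i (fun y => f y - h y) x = pd i f x - pd i h x := by
  unfold pd; rw [fderiv_fun_sub hf hh]; simp

lemma pd_neg (f : E2 → ℝ) (x : E2) (i : Fin 2) :
    pd i (fun y => -f y) x = -pd i f x := by
  unfold pd; rw [fderiv_fun_neg]; simp

lemma pd_const_mul (c : ℝ) {f : E2 → ℝ} {x : E2} (hf : DifferentiableAt ℝ f x) (i : Fin 2) :
    pd i (fun y => c * f y) x = c * pd i f x := by
  unfold pd; rw [fderiv_const_mul hf]; simp

lemma pd_coord (j i : Fin 2) (x : E2) : pd i (fun y => y j) x = if i = j then 1 else 0 := by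
  unfold pd
  have : (fun y : E2 => y j) = (ContinuousLinearMap.proj j : E2 →L[ℝ] ℝ) := rfl
  rw [this, ContinuousLinearMap.fderiv]
  simp [Pi.single_apply, eq_comm]

lemma pd_pd_eq {f : E2 → ℝ} {x : E2} (hd : DifferentiableAt ℝ (fderiv ℝ f) x) (i j : Fin 2) :
    pd i (pd j f) x = fderiv ℝ (fderiv ℝ f) x (Pi.single i 1) (Pi.single j 1) := by
  unfold pd
  rw [fderiv_clm_apply hd (differentiableAt_const _)]
  simp

lemma pd_symm {f : E2 → ℝ} (hf : ContDiff ℝ (⊤:ℕ∞) f) (i j : Fin 2) (x : E2) :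
    pd i (pd j f) x = pd j (pd i f) x := by
  have hd : DifferentiableAt ℝ (fderiv ℝ f) x := by
    have h := hf.fderiv_right (m := (⊤:ℕ∞)) (by exact_mod_cast le_top)
    exact h.differentiable (by simp) x
  rw [pd_pd_eq hd, pd_pd_eq hd]
  refine (hf.contDiffAt.isSymmSndFDerivAt ?_) _ _
  rw [show (2 : WithTop ℕ∞) = ((2:ℕ∞) : WithTop ℕ∞) by norm_cast]
  rw [minSmoothness_of_isRCLikeNormedField]
  exact WithTop.coe_le_coe.mpr le_top

lemma clm_expand_s19 {F : Type*} [NormedAddCommGroup F] [NormedSpace ℝ F]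
    (L : E2 →L[ℝ] F) (x : E2) :
    L x = x 0 • L (Pi.single 0 1) + x 1 • L (Pi.single 1 1) := by
  have hx : x = x 0 • (Pi.single 0 1 : E2) + x 1 • (Pi.single 1 1 : E2) := by
    funext j; fin_cases j <;> simp [Pi.single_apply]
  conv_lhs => rw [hx]
  rw [map_add, map_smul, map_smul]

lemma clm2_zero (L : E2 →L[ℝ] (E2 →L[ℝ] ℝ))
    (h : ∀ i j : Fin 2, L (Pi.single i 1) (Pi.single j 1) = 0) : L = 0 := by
  ext1 x
  have h2 : ∀ v : E2, L x v = 0 := by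
    intro v
    rw [clm_expand_s19 L x]
    rw [ContinuousLinearMap.add_apply, ContinuousLinearMap.smul_apply,
      ContinuousLinearMap.smul_apply]
    rw [clm_expand_s19 (L (Pi.single 0 1)) v, clm_expand_s19 (L (Pi.single 1 1)) v]
    simp [h]
  exact ContinuousLinearMap.ext h2

lemma affine_of_snd_zero (u : E2 → ℝ) (hu : ContDiff ℝ 2 u)
    (h0 : ∀ x, fderiv ℝ (fderiv ℝ u) x = 0) :
    ∃ a b c : ℝ, u = fun x => a + b * x 0 + c * x 1 := by
  have hdu : Differentiable ℝ (fderiv ℝ u) :=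
    (hu.fderiv_right (m := 1) (by norm_num)).differentiable (by norm_num)
  have hconst : ∀ x, fderiv ℝ u x = fderiv ℝ u 0 := fun x =>
    is_const_of_fderiv_eq_zero hdu h0 x 0
  set L := fderiv ℝ u 0 with hL
  have hu1 : Differentiable ℝ u := hu.differentiable (by norm_num)
  have hdiff : ∀ x, fderiv ℝ (fun y => u y - L y) x = 0 := by
    intro x
    rw [fderiv_fun_sub (hu1 x) (L.differentiableAt)]
    rw [hconst x, L.fderiv]
    simp
  have hsub : Differentiable ℝ (fun y => u y - L y) := fun x =>
    ((hu1 x).sub (L.differentiableAt))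
  have key : ∀ x, u x - L x = u 0 - L 0 := fun x =>
    is_const_of_fderiv_eq_zero hsub hdiff x 0
  refine ⟨u 0, L (Pi.single 0 1), L (Pi.single 1 1), ?_⟩
  funext x
  have hx := key x
  rw [clm_expand_s19 L x] at hx
  simp at hx
  linarith [hx]

lemma ricci_eq (g : E2 → ℝ) (hg : ContDiff ℝ (⊤:ℕ∞) g) (j k : Fin 2) (x : E2) :
    ricci (fun i j k x => (if i = k then (1:ℝ) else 0) * pd j g x
      + (if j = k then 1 else 0) * pd i g x) j k x
    = pd j g x * pd k g x - pd j (pd k g) x := by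
  have hd : ∀ (m : Fin 2) (y : E2), DifferentiableAt ℝ (pd m g) y := fun m y =>
    ((pd_smooth hg m).differentiable (by simp)) y
  have hsym := pd_symm hg
  have h2 : ∀ (m a : Fin 2) (y : E2), pd m (fun z => pd a g z + pd a g z) y
      = 2 * pd m (pd a g) y := fun m a y => by
    rw [pd_add (hd a y) (hd a y)]; ring
  unfold ricci
  fin_cases j <;> fin_cases k <;>
    simp only [Fin.sum_univ_two, Fin.isValue, Fin.zero_eta, Fin.mk_one, one_ne_zero,
      zero_ne_one, if_true, if_false, ite_true, ite_false, reduceIte,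
      one_mul, zero_mul, mul_one, mul_zero, add_zero, zero_add] <;>
    simp only [h2, pd_const] <;> ring_nf <;>
    linarith [hsym 0 1 x, hsym 1 0 x]

end helpers

/-- on ℝ², for ∇̃ the strong projective deformation of the flat connection
by dg, the solution space of H_∇̃ f = -f ρ_{s,∇̃} is exactly e^g · Span{1, x¹, x²}. -/
theorem stmt19 (g : (Fin 2 → ℝ) → ℝ) (hg : ContDiff ℝ (⊤ : ℕ∞) g)
    (Γt : Fin 2 → Fin 2 → Fin 2 → (Fin 2 → ℝ) → ℝ)
    (hΓt : Γt = fun i j k x =>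
      (if i = k then 1 else 0) * pd j g x + (if j = k then 1 else 0) * pd i g x) :
    ∀ f : (Fin 2 → ℝ) → ℝ, ContDiff ℝ 2 f →
      ((∀ (x : Fin 2 → ℝ) (i j : Fin 2),
          affHess Γt f i j x = -(f x) * ricciS Γt i j x)
        ↔ ∃ a b c : ℝ, f = fun x => Real.exp (g x) * (a + b * x 0 + c * x 1)) := by
  subst hΓt
  intro f hf
  have hg' : ContDiff ℝ (⊤:ℕ∞) g := hg.of_le (by simp)
  have hgd : ∀ y : E2, DifferentiableAt ℝ g y :=
    fun y => (hg'.differentiable (by simp)) y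
  have hGd : ∀ (m : Fin 2) (y : E2), DifferentiableAt ℝ (pd m g) y := fun m y =>
    ((pd_smooth hg' m).differentiable (by simp)) y
  have hfd : ∀ y : E2, DifferentiableAt ℝ f y :=
    fun y => (hf.differentiable (by norm_num)) y
  have hFd : ∀ (m : Fin 2) (y : E2), DifferentiableAt ℝ (pd m f) y := fun m y =>
    ((pd_c1 hf m).differentiable (by norm_num)) y
  have hsym := pd_symm hg'
  -- the symmetrized Ricci tensor
  have hric : ∀ (i j : Fin 2) (x : E2),
      ricciS (fun i j k x => (if i = k then (1:ℝ) else 0) * pd j g x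
        + (if j = k then 1 else 0) * pd i g x) i j x
      = pd i g x * pd j g x - pd i (pd j g) x := by
    intro i j x
    unfold ricciS
    rw [ricci_eq g hg' i j x, ricci_eq g hg' j i x, hsym j i x]
    ring
  -- the affine Hessian
  have hhess : ∀ (i j : Fin 2) (x : E2),
      affHess (fun i j k x => (if i = k then (1:ℝ) else 0) * pd j g x
        + (if j = k then 1 else 0) * pd i g x) f i j x
      = pd i (pd j f) x - (pd j g x * pd i f x + pd i g x * pd j f x) := by
    intro i j x
    unfold affHess
    fin_cases i <;> fin_cases j <;>
      simp [Fin.sum_univ_two] <;> ring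
  constructor
  · -- forward direction
    intro hsol
    -- the key PDE in clean form
    have heq : ∀ (x : E2) (i j : Fin 2),
        pd i (pd j f) x = pd j g x * pd i f x + pd i g x * pd j f x
          - f x * (pd i g x * pd j g x - pd i (pd j g) x) := by
      intro x i j
      have := hsol x i j
      rw [hhess i j x, hric i j x] at this
      linarith [this]
    set u : E2 → ℝ := fun y => Real.exp (-g y) * f y with hu
    have hed : ∀ y : E2, DifferentiableAt ℝ (fun z => Real.exp (-g z)) y :=
      fun y => ((hgd y).neg).exp
    have hpe : ∀ (i : Fin 2) (y : E2),
        pd i (fun z => Real.exp (-g z)) y = -(Real.exp (-g y) * pd i g y) := by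
      intro i y
      rw [pd_exp (c := fun z => -g z) ((hgd y).neg) i, pd_neg g y i]
      ring
    have hu1 : ∀ j : Fin 2, pd j u
        = fun y => Real.exp (-g y) * (pd j f y - pd j g y * f y) := by
      intro j
      funext y
      rw [hu]
      rw [pd_mul (hed y) (hfd y) j, hpe j y]
      ring
    have hu2 : ∀ (i j : Fin 2) (x : E2), pd i (pd j u) x = 0 := by
      intro i j x
      rw [hu1 j]
      have hd2 : DifferentiableAt ℝ (fun z => pd j f z - pd j g z * f z) x :=
        (hFd j x).sub ((hGd j x).mul (hfd x))
      rw [pd_mul (hed x) hd2 i, hpe i x,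
        pd_sub_s19 (h := fun z => pd j g z * f z) (hFd j x) ((hGd j x).mul (hfd x)) i,
        pd_mul (hGd j x) (hfd x) i, heq x i j]
      ring
    have hucd : ContDiff ℝ 2 u := by
      have h1 : ContDiff ℝ 2 (fun z : E2 => Real.exp (-g z)) := by
        have := (Real.contDiff_exp (n := (⊤:ℕ∞))).comp hg'.neg
        exact this.of_le (by
          rw [show (2 : WithTop ℕ∞) = ((2:ℕ∞) : WithTop ℕ∞) by norm_cast]
          exact WithTop.coe_le_coe.mpr le_top)
      exact h1.mul hf
    have hdu : ∀ x : E2, DifferentiableAt ℝ (fderiv ℝ u) x := fun x =>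
      ((hucd.fderiv_right (m := 1) (by norm_num)).differentiable (by norm_num)) x
    have hsnd : ∀ x : E2, fderiv ℝ (fderiv ℝ u) x = 0 := by
      intro x
      apply clm2_zero
      intro i j
      rw [← pd_pd_eq (hdu x) i j]
      exact hu2 i j x
    obtain ⟨a, b, c, habc⟩ := affine_of_snd_zero u hucd hsnd
    refine ⟨a, b, c, ?_⟩
    funext x
    have hux : u x = a + b * x 0 + c * x 1 := by rw [habc]
    rw [← hux, hu]
    rw [← mul_assoc, ← Real.exp_add]
    simp
  · -- backward direction
    rintro ⟨a, b, c, rfl⟩ x i j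
    rw [hhess i j x, hric i j x]
    set P : E2 → ℝ := fun y => a + b * y 0 + c * y 1 with hP
    have hFP : (fun x : Fin 2 → ℝ => Real.exp (g x) * (a + b * x 0 + c * x 1))
        = fun y => Real.exp (g y) * P y := rfl
    rw [hFP]
    have hcoord : ∀ (k : Fin 2) (y : E2), DifferentiableAt ℝ (fun z : E2 => z k) y :=
      fun k y =>
        show DifferentiableAt ℝ (fun z : E2 => z k) y from
          (ContinuousLinearMap.proj k : E2 →L[ℝ] ℝ).differentiableAt
    have hPd : ∀ y : E2, DifferentiableAt ℝ P y := by
      intro y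
      exact ((differentiableAt_const a).add ((hcoord 0 y).const_mul b)).add
        ((hcoord 1 y).const_mul c)
    have hq : ∀ (m : Fin 2), pd m P
        = fun _ : E2 => b * (if m = 0 then (1:ℝ) else 0) + c * (if m = 1 then 1 else 0) := by
      intro m
      funext y
      have d0 : DifferentiableAt ℝ (fun z : E2 => b * z 0) y := (hcoord 0 y).const_mul b
      have d1 : DifferentiableAt ℝ (fun z : E2 => c * z 1) y := (hcoord 1 y).const_mul c
      have da : DifferentiableAt ℝ (fun z : E2 => a + b * z 0) y :=
        (differentiableAt_const a).add d0
      show pd m (fun y => a + b * y 0 + c * y 1) y = _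
      rw [pd_add da d1 m, pd_add (differentiableAt_const a) d0 m, pd_const a m y,
        pd_const_mul b (hcoord 0 y) m, pd_const_mul c (hcoord 1 y) m,
        pd_coord 0 m y, pd_coord 1 m y]
      ring
    have heg : ∀ y : E2, DifferentiableAt ℝ (fun z : E2 => Real.exp (g z)) y :=
      fun y => (hgd y).exp
    have hf1 : ∀ (m : Fin 2), pd m (fun y => Real.exp (g y) * P y)
        = fun y => Real.exp (g y) * (pd m g y * P y
          + (b * (if m = 0 then (1:ℝ) else 0) + c * (if m = 1 then 1 else 0))) := by
      intro m
      funext y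
      rw [pd_mul (heg y) (hPd y) m, pd_exp (hgd y) m, hq m]
      ring
    simp only [hf1]
    have hd3 : DifferentiableAt ℝ (fun y => pd j g y * P y
        + (b * (if j = 0 then (1:ℝ) else 0) + c * (if j = 1 then 1 else 0))) x :=
      ((hGd j x).mul (hPd x)).add (differentiableAt_const _)
    rw [pd_mul (heg x) hd3 i, pd_exp (hgd x) i,
      pd_add (f := fun y => pd j g y * P y) ((hGd j x).mul (hPd x)) (differentiableAt_const _) i,
      pd_mul (hGd j x) (hPd x) i, pd_const _ i x, hq i]
    ring
end
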